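/- For all integers a, b ≥ 0, the edge-colored distributive lattice L_C2(a,b) of C2-semistandard tableaux of shape (a,b) satisfies the structure condition for the C2 Cartan matrix with rows M_α = (2,−1), M_β = (−2,2): for every covering edge S ⋖ T of color γ, wt(T) = wt(S) + M_γ. -/

import Mathlib

/-- The two colors (simple-root labels) `α` and `β`. -/
inductive TwoColor : Type
  | alpha : TwoColor
  | beta : TwoColor
  deriving DecidableEq

/-- Lengths of paths of `r`-edges ending at `t`. -/
def chainsEndingAt {V : Type*} (r : V → V → Prop) (t : V) : Set ℕ :=
  {n : ℕ | ∃ c : ℕ → V, c n = t ∧ ∀ i : ℕ, i < n → r (c i) (c (i + 1))}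

/-- Lengths of paths of `r`-edges starting at `t`. -/
def chainsStartingAt {V : Type*} (r : V → V → Prop) (t : V) : Set ℕ :=
  {n : ℕ | ∃ c : ℕ → V, c 0 = t ∧ ∀ i : ℕ, i < n → r (c i) (c (i + 1))}

/-- `ρ`: the maximum number of edges in a chain of `r`-edges ending at `t`. -/
noncomputable def rhoOf {V : Type*} (r : V → V → Prop) (t : V) : ℕ :=
  sSup (chainsEndingAt r t)

/-- `δ`: the maximum number of edges in a chain of `r`-edges starting at `t`. -/
noncomputable def deltaOf {V : Type*} (r : V → V → Prop) (t : V) : ℕ :=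
  sSup (chainsStartingAt r t)

/-- `l = ρ + δ`. -/
noncomputable def lenOf {V : Type*} (r : V → V → Prop) (t : V) : ℕ :=
  rhoOf r t + deltaOf r t

/-- The weight `wt(t) = (ρ_α(t) − δ_α(t), ρ_β(t) − δ_β(t))` of an element of an
edge-colored poset whose (colored) covering relations are given by `cov`. -/
noncomputable def wtOf {V : Type*} (cov : TwoColor → V → V → Prop) (t : V) : ℤ × ℤ :=
  ((rhoOf (cov TwoColor.alpha) t : ℤ) - (deltaOf (cov TwoColor.alpha) t : ℤ),
   (rhoOf (cov TwoColor.beta) t : ℤ) - (deltaOf (cov TwoColor.beta) t : ℤ))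

/-- The structure condition for a `2 × 2` integer matrix `M` (given by its rows
`M γ` for `γ ∈ {α, β}`): along any covering edge of color `γ`, the weight changes by `M γ`. -/
def StructureCondition {V : Type*} (cov : TwoColor → V → V → Prop)
    (M : TwoColor → ℤ × ℤ) : Prop :=
  ∀ (γ : TwoColor) (s t : V), cov γ s t → wtOf cov t = wtOf cov s + M γ

/-- The elements of the distributive lattice `J(P)`: order ideals (lower sets) of `P`. -/
abbrev OrderIdeal (V : Type*) [PartialOrder V] : Type _ := {I : Set V // IsLowerSet I}

/-- The colored covering relation of `J_color(P)` for a vertex-colored poset `P`: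
`s ⋖ t` with color `γ` when `t ∖ s` is a single vertex of color `γ`. -/
def idealCov {V : Type*} [PartialOrder V] (vcolor : V → TwoColor) (γ : TwoColor)
    (s t : OrderIdeal V) : Prop :=
  ∃ u : V, vcolor u = γ ∧ u ∉ s.1 ∧ t.1 = insert u s.1
/-- A filling of the shape with `b` columns of length two (each recorded as
(top entry, bottom entry)) followed by `a` columns of length one. -/
abbrev TabT (a b : ℕ) : Type := (Fin b → ℕ × ℕ) × (Fin a → ℕ)

/-- `n_k(T)`: the number of entries of the tableau `T` equal to `k`. -/
def nkOf {m n : ℕ} (T : (Fin m → ℕ × ℕ) × (Fin n → ℕ)) (k : ℕ) : ℕ :=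
  (Finset.univ.filter fun j : Fin m => (T.1 j).1 = k).card +
    (Finset.univ.filter fun j : Fin m => (T.1 j).2 = k).card +
    (Finset.univ.filter fun i : Fin n => T.2 i = k).card

/-- The set of `A2`-semistandard tableaux of shape `(a,b)`: entries from `{1,2,3}`,
rows weakly increasing, columns strictly increasing. -/
def SA2 (a b : ℕ) : Set (TabT a b) :=
  {T | (∀ j : Fin b, 1 ≤ (T.1 j).1 ∧ (T.1 j).1 ≤ 3 ∧ 1 ≤ (T.1 j).2 ∧ (T.1 j).2 ≤ 3 ∧
          (T.1 j).1 < (T.1 j).2) ∧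
       (∀ i : Fin a, 1 ≤ T.2 i ∧ T.2 i ≤ 3) ∧
       (∀ j j' : Fin b, j ≤ j' → (T.1 j).1 ≤ (T.1 j').1 ∧ (T.1 j).2 ≤ (T.1 j').2) ∧
       (∀ i i' : Fin a, i ≤ i' → T.2 i ≤ T.2 i') ∧
       (∀ (j : Fin b) (i : Fin a), (T.1 j).1 ≤ T.2 i)}

/-- The set of `C2`-semistandard tableaux of shape `(a,b)`: entries from `{1,2,3,4}`,
rows weakly increasing, columns strictly increasing, no column equal to `(1,4)`,
and at most one column equal to `(2,3)`. -/
def SC2 (a b : ℕ) : Set (TabT a b) :=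
  {T | (∀ j : Fin b, 1 ≤ (T.1 j).1 ∧ (T.1 j).1 ≤ 4 ∧ 1 ≤ (T.1 j).2 ∧ (T.1 j).2 ≤ 4 ∧
          (T.1 j).1 < (T.1 j).2) ∧
       (∀ i : Fin a, 1 ≤ T.2 i ∧ T.2 i ≤ 4) ∧
       (∀ j j' : Fin b, j ≤ j' → (T.1 j).1 ≤ (T.1 j').1 ∧ (T.1 j).2 ≤ (T.1 j').2) ∧
       (∀ i i' : Fin a, i ≤ i' → T.2 i ≤ T.2 i') ∧
       (∀ (j : Fin b) (i : Fin a), (T.1 j).1 ≤ T.2 i) ∧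
       (∀ j : Fin b, T.1 j ≠ (1, 4)) ∧
       (∀ j j' : Fin b, T.1 j = (2, 3) → T.1 j' = (2, 3) → j = j')}

/-- The restrictions of Figure 4.5 on a pair of adjacent length-two columns of a
`G2`-semistandard tableau. -/
def g2pair2 (c c' : ℕ × ℕ) : Prop :=
  (c = (1, 4) → c' ≠ (1, 4) ∧ c' ≠ (1, 5) ∧ c' ≠ (1, 6) ∧ c' ≠ (1, 7)) ∧
  (c = (1, 5) → c' ≠ (1, 5) ∧ c' ≠ (1, 6) ∧ c' ≠ (1, 7)) ∧
  (c = (1, 6) → c' ≠ (1, 6) ∧ c' ≠ (1, 7) ∧ c' ≠ (2, 6) ∧ c' ≠ (2, 7)) ∧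
  (c = (2, 6) → c' ≠ (2, 6) ∧ c' ≠ (2, 7)) ∧
  (c = (1, 7) → c' ≠ (1, 7) ∧ c' ≠ (2, 7) ∧ c' ≠ (3, 7) ∧ c' ≠ (4, 7)) ∧
  (c = (2, 7) → c' ≠ (2, 7) ∧ c' ≠ (3, 7) ∧ c' ≠ (4, 7)) ∧
  (c = (3, 7) → c' ≠ (3, 7) ∧ c' ≠ (4, 7)) ∧
  (c = (4, 7) → c' ≠ (4, 7))

/-- The restrictions of Figure 4.5 on a length-two column followed by a
length-one column in a `G2`-semistandard tableau. -/
def g2pair1 (c : ℕ × ℕ) (e : ℕ) : Prop :=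
  (c = (1, 4) → e ≠ 1) ∧
  (c = (1, 5) → e ≠ 1) ∧
  (c = (1, 6) → e ≠ 1 ∧ e ≠ 2) ∧
  (c = (2, 6) → e ≠ 2) ∧
  (c = (1, 7) → e ≠ 1 ∧ e ≠ 2 ∧ e ≠ 3 ∧ e ≠ 4) ∧
  (c = (2, 7) → e ≠ 2 ∧ e ≠ 3 ∧ e ≠ 4) ∧
  (c = (3, 7) → e ≠ 3 ∧ e ≠ 4) ∧
  (c = (4, 7) → e ≠ 4)

/-- The set of `G2`-semistandard tableaux of shape `(a,b)`. -/
def SG2 (a b : ℕ) : Set (TabT a b) :=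
  {T | (∀ j : Fin b, 1 ≤ (T.1 j).1 ∧ (T.1 j).1 ≤ 7 ∧ 1 ≤ (T.1 j).2 ∧ (T.1 j).2 ≤ 7 ∧
          (T.1 j).1 < (T.1 j).2) ∧
       (∀ i : Fin a, 1 ≤ T.2 i ∧ T.2 i ≤ 7) ∧
       (∀ j j' : Fin b, j ≤ j' → (T.1 j).1 ≤ (T.1 j').1 ∧ (T.1 j).2 ≤ (T.1 j').2) ∧
       (∀ i i' : Fin a, i ≤ i' → T.2 i ≤ T.2 i') ∧
       (∀ (j : Fin b) (i : Fin a), (T.1 j).1 ≤ T.2 i) ∧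
       (∀ i i' : Fin a, T.2 i = 4 → T.2 i' = 4 → i = i') ∧
       (∀ j : Fin b, T.1 j ≠ (2, 3) ∧ T.1 j ≠ (2, 4) ∧ T.1 j ≠ (3, 4) ∧ T.1 j ≠ (3, 5) ∧
          T.1 j ≠ (4, 5) ∧ T.1 j ≠ (4, 6) ∧ T.1 j ≠ (5, 6)) ∧
       (∀ j j' : Fin b, (j' : ℕ) = (j : ℕ) + 1 → g2pair2 (T.1 j) (T.1 j')) ∧
       (∀ (j : Fin b) (i : Fin a), (j : ℕ) + 1 = b → (i : ℕ) = 0 → g2pair1 (T.1 j) (T.2 i))}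
/-- The edge colors determined by tableau entries: for `A2`, the entry `1` gives
color `α` and the entry `2` gives color `β`. -/
def colEntA2 : ℕ → TwoColor := fun n => if n = 2 then TwoColor.beta else TwoColor.alpha

/-- For `C2`, entries `1` and `3` give color `α` and entry `2` gives color `β`. -/
def colEntC2 : ℕ → TwoColor := fun n => if n = 2 then TwoColor.beta else TwoColor.alpha

/-- For `G2`, entries `1, 3, 4, 6` give color `α` and entries `2, 5` give color `β`. -/
def colEntG2 : ℕ → TwoColor :=
  fun n => if n = 2 ∨ n = 5 then TwoColor.beta else TwoColor.alpha

/-- The colored covering relation of a lattice of semistandard tableaux: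
`T` covers `S` exactly when `S` is obtained from `T` by increasing a single
entry by `1`, and the edge is colored according to the entry of `T`
at the changed position (via `colEnt`). -/
def tabCov {a b : ℕ} (colEnt : ℕ → TwoColor) (SSet : Set (TabT a b)) (γ : TwoColor)
    (S T : {T : TabT a b // T ∈ SSet}) : Prop :=
  (∃ j : Fin b, colEnt ((T.1.1 j).1) = γ ∧
      S.1.1 j = ((T.1.1 j).1 + 1, (T.1.1 j).2) ∧
      (∀ j' : Fin b, j' ≠ j → S.1.1 j' = T.1.1 j') ∧ S.1.2 = T.1.2) ∨
  (∃ j : Fin b, colEnt ((T.1.1 j).2) = γ ∧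
      S.1.1 j = ((T.1.1 j).1, (T.1.1 j).2 + 1) ∧
      (∀ j' : Fin b, j' ≠ j → S.1.1 j' = T.1.1 j') ∧ S.1.2 = T.1.2) ∨
  (∃ i : Fin a, colEnt (T.1.2 i) = γ ∧
      S.1.2 i = T.1.2 i + 1 ∧
      (∀ i' : Fin a, i' ≠ i → S.1.2 i' = T.1.2 i') ∧ S.1.1 = T.1.1)

/-- The colored covering relation of the lattice `L_A2(a,b)`. -/
def covA2 (a b : ℕ) (γ : TwoColor) (S T : {T : TabT a b // T ∈ SA2 a b}) : Prop :=
  tabCov colEntA2 (SA2 a b) γ S T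

/-- The colored covering relation of the lattice `L_C2(a,b)`. -/
def covC2 (a b : ℕ) (γ : TwoColor) (S T : {T : TabT a b // T ∈ SC2 a b}) : Prop :=
  tabCov colEntC2 (SC2 a b) γ S T

/-- The colored covering relation of the lattice `L_G2(a,b)`. -/
def covG2 (a b : ℕ) (γ : TwoColor) (S T : {T : TabT a b // T ∈ SG2 a b}) : Prop :=
  tabCov colEntG2 (SG2 a b) γ S T

/-- The `A2` Cartan matrix, given by its rows `M_α = (2,−1)`, `M_β = (−1,2)`. -/
def MA2 : TwoColor → ℤ × ℤ
  | TwoColor.alpha => (2, -1)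
  | TwoColor.beta => (-1, 2)

/-- The `C2` Cartan matrix, given by its rows `M_α = (2,−1)`, `M_β = (−2,2)`. -/
def MC2 : TwoColor → ℤ × ℤ
  | TwoColor.alpha => (2, -1)
  | TwoColor.beta => (-2, 2)

/-- The `G2` Cartan matrix, given by its rows `M_α = (2,−1)`, `M_β = (−3,2)`. -/
def MG2 : TwoColor → ℤ × ℤ
  | TwoColor.alpha => (2, -1)
  | TwoColor.beta => (-3, 2)

/-!
For each color `γ`, `ρ_γ` and `δ_γ` of a tableau are the sums of `ρ_γ` and `δ_γ` of its
columns and boxes, computed in the one-column and one-box lattices. A potential `W` equals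
`ρ_γ` as soon as it grows by exactly one along every `γ`-edge (so no chain is longer than `W`)
and every `T` with `W T > 0` is the top of some `γ`-edge (so a chain of length `W` can be built
downwards); such an edge is found by raising the last, or lowering the first, occurrence of a
suitable entry. Hence the weight is additive too, and since a `γ`-edge changes a single column
or box, `wt T - wt S = M_γ` reduces to a check on the five columns and four boxes.
-/

section Chains

variable {V : Type*} {r : V → V → Prop} {W : V → ℕ}

lemma chainsStartingAt_eq_chainsEndingAt_flip (r : V → V → Prop) (t : V) :
    chainsStartingAt r t = chainsEndingAt (flip r) t := by
  ext n
  constructor <;>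
  · rintro ⟨c, hc, hstep⟩
    refine ⟨fun i => c (n - i), by simpa using hc, fun i hi => ?_⟩
    have := hstep (n - (i + 1)) (by omega)
    rwa [show n - (i + 1) + 1 = n - i by omega] at this

lemma le_of_mem_chainsEndingAt (hstep : ∀ s u, r s u → W u = W s + 1) {t : V} {n : ℕ}
    (hn : n ∈ chainsEndingAt r t) : n ≤ W t := by
  obtain ⟨c, rfl, hc⟩ := hn
  suffices ∀ i ≤ n, i ≤ W (c i) from this n le_rfl
  intro i
  induction i with
  | zero => exact fun _ => Nat.zero_le _
  | succ k ih =>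
    intro hk
    have := hstep _ _ (hc k (by omega))
    have := ih (by omega)
    omega

lemma potential_mem_chainsEndingAt (hstep : ∀ s u, r s u → W u = W s + 1)
    (hex : ∀ u, 0 < W u → ∃ s, r s u) (t : V) : W t ∈ chainsEndingAt r t := by
  induction hW : W t generalizing t with
  | zero => exact ⟨fun _ => t, rfl, fun i hi => absurd hi (Nat.not_lt_zero i)⟩
  | succ k ih =>
    obtain ⟨s, hs⟩ := hex t (by omega)
    obtain ⟨c, hck, hc⟩ := ih s (by have := hstep s t hs; omega)
    refine ⟨Function.update c (k + 1) t, by simp, fun i hi => ?_⟩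
    rcases Nat.lt_succ_iff_lt_or_eq.mp hi with hi | rfl
    · simpa [Function.update_of_ne (show i ≠ k + 1 by omega),
        Function.update_of_ne (show i + 1 ≠ k + 1 by omega)] using hc i hi
    · simpa [Function.update_of_ne (show i ≠ i + 1 by omega), hck] using hs

theorem rhoOf_eq_of_potential (hstep : ∀ s u, r s u → W u = W s + 1)
    (hex : ∀ u, 0 < W u → ∃ s, r s u) (t : V) : rhoOf r t = W t :=
  IsGreatest.csSup_eq
    ⟨potential_mem_chainsEndingAt hstep hex t, fun _ hn => le_of_mem_chainsEndingAt hstep hn⟩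

theorem deltaOf_eq_of_potential (hstep : ∀ s u, r s u → W s = W u + 1)
    (hex : ∀ s, 0 < W s → ∃ u, r s u) (t : V) : deltaOf r t = W t := by
  rw [deltaOf, chainsStartingAt_eq_chainsEndingAt_flip]
  exact rhoOf_eq_of_potential (fun s u h => hstep u s h) hex t

end Chains

lemma Finite.exists_last {ι : Type*} [LinearOrder ι] [Finite ι] {P : ι → Prop} (h : ∃ i, P i) :
    ∃ i, P i ∧ ∀ i', P i' → i' ≤ i :=
  Set.exists_max_image {i | P i} id (Set.toFinite _) h

lemma Finite.exists_first {ι : Type*} [LinearOrder ι] [Finite ι] {P : ι → Prop} (h : ∃ i, P i) :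
    ∃ i, P i ∧ ∀ i', P i' → i ≤ i' :=
  Set.exists_min_image {i | P i} id (Set.toFinite _) h

section TabSum

variable {a b : ℕ} {M : Type*}

def tabSum [AddCommMonoid M] (f : ℕ × ℕ → M) (g : ℕ → M) (T : TabT a b) : M :=
  ∑ j, f (T.1 j) + ∑ i, g (T.2 i)

lemma sum_comp_update_add [AddCommMonoid M] {ι κ : Type*} [Fintype ι] [DecidableEq ι]
    (u : ι → κ) (j : ι) (c : κ) (f : κ → M) {d₁ d₂ : M} (h : f (u j) + d₁ = f c + d₂) :
    ∑ i, f (u i) + d₁ = ∑ i, f (Function.update u j c i) + d₂ := by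
  have hrest : ∑ i ∈ Finset.univ.erase j, f (Function.update u j c i) =
      ∑ i ∈ Finset.univ.erase j, f (u i) :=
    Finset.sum_congr rfl fun i hi => by rw [Function.update_of_ne (Finset.ne_of_mem_erase hi)]
  rw [← Finset.add_sum_erase _ _ (Finset.mem_univ j),
    ← Finset.add_sum_erase _ (fun i => f (Function.update u j c i)) (Finset.mem_univ j),
    Function.update_self, hrest, add_right_comm, h, add_right_comm]

lemma exists_pos_of_tabSum_pos {f : ℕ × ℕ → ℕ} {g : ℕ → ℕ} {T : TabT a b}
    (h : 0 < tabSum f g T) : (∃ j, 0 < f (T.1 j)) ∨ ∃ i, 0 < g (T.2 i) := by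
  simpa [tabSum, Finset.sum_pos_iff] using h

end TabSum

section C2

variable {a b : ℕ}

def c2Columns : List (ℕ × ℕ) := [(1, 2), (1, 3), (2, 3), (2, 4), (3, 4)]

lemma mem_c2Columns {T : TabT a b} (hT : T ∈ SC2 a b) (j : Fin b) : T.1 j ∈ c2Columns := by
  obtain ⟨hcol, -, -, -, -, h14, -⟩ := hT
  have := hcol j
  have := h14 j
  generalize T.1 j = c at *
  obtain ⟨x, y⟩ := c
  simp only [c2Columns, List.mem_cons, List.not_mem_nil, Prod.mk.injEq, ne_eq] at *
  omega

abbrev ColRaise (colEnt : ℕ → TwoColor) (γ : TwoColor) (c c' : ℕ × ℕ) : Prop :=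
  colEnt c.1 = γ ∧ c' = (c.1 + 1, c.2) ∨ colEnt c.2 = γ ∧ c' = (c.1, c.2 + 1)

theorem tabSum_add_of_covC2 {M : Type*} [AddCommMonoid M] {f : ℕ × ℕ → M} {g : ℕ → M}
    {d₁ d₂ : M} {γ : TwoColor}
    (hf : ∀ c ∈ c2Columns, ∀ c' ∈ c2Columns, ColRaise colEntC2 γ c c' → f c + d₁ = f c' + d₂)
    (hg : ∀ k ∈ [1, 2, 3], colEntC2 k = γ → g k + d₁ = g (k + 1) + d₂)
    {S T : {T : TabT a b // T ∈ SC2 a b}} (h : covC2 a b γ S T) :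
    tabSum f g T.1 + d₁ = tabSum f g S.1 + d₂ := by
  rcases h with ⟨j, hγ, hSj, hoth, hrow⟩ | ⟨j, hγ, hSj, hoth, hrow⟩ | ⟨i, hγ, hSi, hoth, hcol⟩
  all_goals unfold tabSum
  · rw [hrow, add_right_comm, sum_comp_update_add T.1.1 j (S.1.1 j) f
      (hf _ (mem_c2Columns T.2 j) _ (mem_c2Columns S.2 j) (.inl ⟨hγ, hSj⟩)),
      ← Function.eq_update_iff.mpr ⟨rfl, hoth⟩, add_right_comm]
  · rw [hrow, add_right_comm, sum_comp_update_add T.1.1 j (S.1.1 j) f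
      (hf _ (mem_c2Columns T.2 j) _ (mem_c2Columns S.2 j) (.inr ⟨hγ, hSj⟩)),
      ← Function.eq_update_iff.mpr ⟨rfl, hoth⟩, add_right_comm]
  · have hk : T.1.2 i ∈ [1, 2, 3] := by
      have := S.2.2.1 i
      have := T.2.2.1 i
      simp only [List.mem_cons, List.not_mem_nil]
      omega
    rw [hcol, add_assoc, sum_comp_update_add T.1.2 i (S.1.2 i) g (hSi ▸ hg _ hk hγ),
      ← Function.eq_update_iff.mpr ⟨rfl, hoth⟩, add_assoc]

def updCol (T : TabT a b) (j : Fin b) (c : ℕ × ℕ) : TabT a b :=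
  (Function.update T.1 j c, T.2)

def updBox (T : TabT a b) (i : Fin a) (v : ℕ) : TabT a b :=
  (T.1, Function.update T.2 i v)

lemma updCol_mem {T : TabT a b} (hT : T ∈ SC2 a b) (j : Fin b) (c : ℕ × ℕ)
    (hc : 1 ≤ c.1 ∧ c.1 < c.2 ∧ c.2 ≤ 4)
    (hL : ∀ j' < j, (T.1 j').1 ≤ c.1 ∧ (T.1 j').2 ≤ c.2)
    (hR : ∀ j', j < j' → c.1 ≤ (T.1 j').1 ∧ c.2 ≤ (T.1 j').2)
    (hrow : ∀ i, c.1 ≤ T.2 i) (h14 : c ≠ (1, 4))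
    (h23 : c = (2, 3) → ∀ j' ≠ j, T.1 j' ≠ (2, 3)) :
    updCol T j c ∈ SC2 a b := by
  obtain ⟨t1, t2, t3, t4, t5, t6, t7⟩ := hT
  refine ⟨fun j' => ?_, t2, fun j1 j2 hle => ?_, t4, fun j' i => ?_, fun j' => ?_,
    fun j1 j2 hj1 hj2 => ?_⟩
  · rcases eq_or_ne j' j with rfl | h
    · simp only [updCol, Function.update_self]; omega
    · simpa [updCol, Function.update_of_ne h] using t1 j'
  · rcases eq_or_ne j1 j with rfl | h1 <;> rcases eq_or_ne j2 j1 with rfl | h2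
    · simp
    · simpa [updCol, Function.update_of_ne h2] using hR j2 (lt_of_le_of_ne hle h2.symm)
    · simp
    · rcases eq_or_ne j2 j with rfl | h3
      · simpa [updCol, Function.update_of_ne h1] using hL j1 (lt_of_le_of_ne hle h2.symm)
      · simpa [updCol, Function.update_of_ne h1, Function.update_of_ne h3] using t3 j1 j2 hle
  · rcases eq_or_ne j' j with rfl | h
    · simpa [updCol] using hrow i
    · simpa [updCol, Function.update_of_ne h] using t5 j' i
  · rcases eq_or_ne j' j with rfl | h
    · simpa [updCol] using h14
    · simpa [updCol, Function.update_of_ne h] using t6 j'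
  · simp only [updCol] at hj1 hj2
    rcases eq_or_ne j1 j with rfl | h1 <;> rcases eq_or_ne j2 j1 with rfl | h2
    · rfl
    · rw [Function.update_self] at hj1
      rw [Function.update_of_ne h2] at hj2
      exact absurd hj2 (h23 hj1 j2 h2)
    · rfl
    · rcases eq_or_ne j2 j with rfl | h3
      · rw [Function.update_self] at hj2
        rw [Function.update_of_ne h1] at hj1
        exact absurd hj1 (h23 hj2 j1 h1)
      · rw [Function.update_of_ne h1] at hj1
        rw [Function.update_of_ne h3] at hj2
        exact t7 j1 j2 hj1 hj2

lemma updBox_mem {T : TabT a b} (hT : T ∈ SC2 a b) (i : Fin a) (v : ℕ) (hv : 1 ≤ v ∧ v ≤ 4)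
    (hL : ∀ i' < i, T.2 i' ≤ v) (hR : ∀ i', i < i' → v ≤ T.2 i')
    (hcol : ∀ j, (T.1 j).1 ≤ v) :
    updBox T i v ∈ SC2 a b := by
  obtain ⟨t1, t2, t3, t4, t5, t6, t7⟩ := hT
  refine ⟨t1, fun i' => ?_, t3, fun i1 i2 hle => ?_, fun j i' => ?_, t6, t7⟩
  · rcases eq_or_ne i' i with rfl | h
    · simpa [updBox] using hv
    · simpa [updBox, Function.update_of_ne h] using t2 i'
  · rcases eq_or_ne i1 i with rfl | h1 <;> rcases eq_or_ne i2 i1 with rfl | h2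
    · simp
    · simpa [updBox, Function.update_of_ne h2] using hR i2 (lt_of_le_of_ne hle h2.symm)
    · simp
    · rcases eq_or_ne i2 i with rfl | h3
      · simpa [updBox, Function.update_of_ne h1] using hL i1 (lt_of_le_of_ne hle h2.symm)
      · simpa [updBox, Function.update_of_ne h1, Function.update_of_ne h3] using t4 i1 i2 hle
  · rcases eq_or_ne i' i with rfl | h
    · simpa [updBox] using hcol j
    · simpa [updBox, Function.update_of_ne h] using t5 j i'

end C2

section Moves

variable {a b : ℕ} {T : {T : TabT a b // T ∈ SC2 a b}}

/- Raising the last occurrence of an entry, or lowering the first one, keeps rows weakly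
increasing; the remaining hypotheses are what the column conditions of `SC2` need. -/

lemma exists_covC2_raise_box {v : ℕ} (h : ∃ i, T.1.2 i = v) (hv : v ≤ 3) :
    ∃ S, covC2 a b (colEntC2 v) S T := by
  obtain ⟨i, hi, hlast⟩ := Finite.exists_last h
  obtain ⟨-, t2, -, t4, t5, -, -⟩ := T.2
  refine ⟨⟨updBox T.1 i (v + 1), updBox_mem T.2 i (v + 1) ?_ ?_ ?_ ?_⟩,
    .inr (.inr ⟨i, by rw [hi], by simp [updBox, hi], fun i' hi' => by simp [updBox, hi'], rfl⟩)⟩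
  · have := t2 i; omega
  · intro i' hi'; have := t4 i' i hi'.le; omega
  · intro i' hi'
    have := t4 i i' hi'.le
    have : T.1.2 i' ≠ v := fun h => (hlast i' h).not_gt hi'
    omega
  · intro j; have := t5 j i; omega

lemma exists_covC2_lower_box {v : ℕ} (h : ∃ i, T.1.2 i = v + 1) (hv : 1 ≤ v)
    (hcol : ∀ j, (T.1.1 j).1 ≤ v) : ∃ S, covC2 a b (colEntC2 v) T S := by
  obtain ⟨i, hi, hfirst⟩ := Finite.exists_first h
  obtain ⟨-, t2, -, t4, -, -, -⟩ := T.2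
  refine ⟨⟨updBox T.1 i v, updBox_mem T.2 i v ?_ ?_ ?_ hcol⟩,
    .inr (.inr ⟨i, by simp [updBox], by simp [updBox, hi],
      fun i' hi' => by simp [updBox, hi'], rfl⟩)⟩
  · have := t2 i; omega
  · intro i' hi'
    have := t4 i' i hi'.le
    have : T.1.2 i' ≠ v + 1 := fun h => (hfirst i' h).not_gt hi'
    omega
  · intro i' hi'; have := t4 i i' hi'.le; omega

lemma exists_covC2_raise_bottom {x y : ℕ} (h : ∃ j, T.1.1 j = (x, y)) (hy : y ≤ 3)
    (hxy : (x, y) ≠ (1, 3)) : ∃ S, covC2 a b (colEntC2 y) S T := by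
  obtain ⟨j₀, hj₀⟩ := h
  obtain ⟨j, hj, hlast⟩ :=
    Finite.exists_last (P := fun j => (T.1.1 j).2 = y) ⟨j₀, by simp [hj₀]⟩
  obtain ⟨t1, -, t3, -, t5, -, -⟩ := T.2
  have hx : x ≤ (T.1.1 j).1 := by
    simpa [hj₀] using (t3 j₀ j (hlast j₀ (by simp [hj₀]))).1
  have hx₀ := t1 j₀
  have htop := t1 j
  rw [hj₀] at hx₀
  simp only [ne_eq, Prod.mk.injEq] at hxy hx₀
  refine ⟨⟨updCol T.1 j ((T.1.1 j).1, y + 1), updCol_mem T.2 j _ ?_ ?_ ?_ ?_ ?_ ?_⟩,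
    .inr (.inl ⟨j, by rw [hj], by simp [updCol, hj], fun j' hj' => by simp [updCol, hj'], rfl⟩)⟩
  · dsimp only; omega
  · intro j' hj'; have := t3 j' j hj'.le; omega
  · intro j' hj'
    have := t3 j j' hj'.le
    have : (T.1.1 j').2 ≠ y := fun h => (hlast j' h).not_gt hj'
    omega
  · intro i; exact t5 j i
  · simp only [ne_eq, Prod.mk.injEq]; omega
  · simp only [Prod.mk.injEq]; omega

lemma exists_covC2_raise_top {x y : ℕ} (h : ∃ j, T.1.1 j = (x, y)) (hxy : x + 1 < y)
    (hrow : ∀ i, x < T.1.2 i) (h23 : (x + 1, y) = (2, 3) → ∀ j, T.1.1 j ≠ (2, 3)) :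
    ∃ S, covC2 a b (colEntC2 x) S T := by
  obtain ⟨j₀, hj₀⟩ := h
  obtain ⟨j, hj, hlast⟩ :=
    Finite.exists_last (P := fun j => (T.1.1 j).1 = x) ⟨j₀, by simp [hj₀]⟩
  obtain ⟨t1, -, t3, -, -, -, -⟩ := T.2
  have hy : y ≤ (T.1.1 j).2 := by
    simpa [hj₀] using (t3 j₀ j (hlast j₀ (by simp [hj₀]))).2
  have hx₀ := t1 j₀
  rw [hj₀] at hx₀
  simp only at hx₀
  refine ⟨⟨updCol T.1 j (x + 1, (T.1.1 j).2), updCol_mem T.2 j _ ?_ ?_ ?_ ?_ ?_ ?_⟩,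
    .inl ⟨j, by rw [hj], by simp [updCol, hj], fun j' hj' => by simp [updCol, hj'], rfl⟩⟩
  · have := t1 j; dsimp only; omega
  · intro j' hj'; have := t3 j' j hj'.le; omega
  · intro j' hj'
    have := t3 j j' hj'.le
    have : (T.1.1 j').1 ≠ x := fun h => (hlast j' h).not_gt hj'
    omega
  · exact hrow
  · simp only [ne_eq, Prod.mk.injEq]; omega
  · intro h j' _
    simp only [Prod.mk.injEq] at h
    exact h23 (by simp only [Prod.mk.injEq]; omega) j'

lemma exists_covC2_lower_top {v y : ℕ} (h : ∃ j, T.1.1 j = (v + 1, y)) (hv : 1 ≤ v)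
    (h24 : (v + 1, y) ≠ (2, 4)) : ∃ S, covC2 a b (colEntC2 v) T S := by
  obtain ⟨j₀, hj₀⟩ := h
  obtain ⟨j, hj, hfirst⟩ :=
    Finite.exists_first (P := fun j => (T.1.1 j).1 = v + 1) ⟨j₀, by simp [hj₀]⟩
  obtain ⟨t1, -, t3, -, t5, -, -⟩ := T.2
  have hy : (T.1.1 j).2 ≤ y := by
    simpa [hj₀] using (t3 j j₀ (hfirst j₀ (by simp [hj₀]))).2
  have hy₀ := t1 j₀
  have hcol := t1 j
  rw [hj₀] at hy₀
  simp only [ne_eq, Prod.mk.injEq] at h24 hy₀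
  refine ⟨⟨updCol T.1 j (v, (T.1.1 j).2), updCol_mem T.2 j _ ?_ ?_ ?_ ?_ ?_ ?_⟩,
    .inl ⟨j, by simp [updCol], by simp [updCol, Prod.ext_iff, hj],
      fun j' hj' => by simp [updCol, hj'], rfl⟩⟩
  · dsimp only; omega
  · intro j' hj'
    have := t3 j' j hj'.le
    have : (T.1.1 j').1 ≠ v + 1 := fun h => (hfirst j' h).not_gt hj'
    omega
  · intro j' hj'; have := t3 j j' hj'.le; omega
  · intro i; have := t5 j i; dsimp only; omega
  · simp only [ne_eq, Prod.mk.injEq]; omega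
  · simp only [Prod.mk.injEq]; omega

lemma exists_covC2_lower_bottom {x v : ℕ} (h : ∃ j, T.1.1 j = (x, v + 1)) (hxv : x < v)
    (h23 : (x, v) = (2, 3) → ∀ j, T.1.1 j ≠ (2, 3)) : ∃ S, covC2 a b (colEntC2 v) T S := by
  obtain ⟨j₀, hj₀⟩ := h
  obtain ⟨j, hj, hfirst⟩ :=
    Finite.exists_first (P := fun j => (T.1.1 j).2 = v + 1) ⟨j₀, by simp [hj₀]⟩
  obtain ⟨t1, -, t3, -, t5, -, -⟩ := T.2
  have hx : (T.1.1 j).1 ≤ x := by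
    simpa [hj₀] using (t3 j j₀ (hfirst j₀ (by simp [hj₀]))).1
  have hcol := t1 j
  refine ⟨⟨updCol T.1 j ((T.1.1 j).1, v), updCol_mem T.2 j _ ?_ ?_ ?_ ?_ ?_ ?_⟩,
    .inr (.inl ⟨j, by simp [updCol], by simp [updCol, Prod.ext_iff, hj],
      fun j' hj' => by simp [updCol, hj'], rfl⟩)⟩
  · dsimp only; omega
  · intro j' hj'
    have := t3 j' j hj'.le
    have : (T.1.1 j').2 ≠ v + 1 := fun h => (hfirst j' h).not_gt hj'
    omega
  · intro j' hj'; have := t3 j j' hj'.le; omega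
  · exact t5 j
  · simp only [ne_eq, Prod.mk.injEq]; omega
  · intro h j' _
    simp only [Prod.mk.injEq] at h
    exact h23 (by simp only [Prod.mk.injEq]; omega) j'

end Moves

section Potentials

variable {a b : ℕ}

/-- `rhoCol γ c` and `deltaCol γ c` are `ρ_γ(c)` and `δ_γ(c)` in `L_C2(0,1)`, the chain
`(3,4) –β– (2,4) –α– (2,3) –α– (1,3) –β– (1,2)`. -/
def rhoCol : TwoColor → ℕ × ℕ → ℕ
  | .alpha, c => if c = (1, 3) then 2 else if c = (2, 3) then 1 else 0
  | .beta, c => if c = (1, 2) ∨ c = (2, 4) then 1 else 0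

def deltaCol : TwoColor → ℕ × ℕ → ℕ
  | .alpha, c => if c = (2, 4) then 2 else if c = (2, 3) then 1 else 0
  | .beta, c => if c = (1, 3) ∨ c = (3, 4) then 1 else 0

/-- `rhoBox γ k` and `deltaBox γ k` are `ρ_γ(k)` and `δ_γ(k)` in `L_C2(1,0)`, the chain
`4 –α– 3 –β– 2 –α– 1`. -/
def rhoBox : TwoColor → ℕ → ℕ
  | .alpha, k => if k = 1 ∨ k = 3 then 1 else 0
  | .beta, k => if k = 2 then 1 else 0

def deltaBox : TwoColor → ℕ → ℕ
  | .alpha, k => if k = 2 ∨ k = 4 then 1 else 0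
  | .beta, k => if k = 3 then 1 else 0

variable {T : {T : TabT a b // T ∈ SC2 a b}}

lemma exists_covC2_alpha_of_rho_pos (h : 0 < tabSum (rhoCol .alpha) (rhoBox .alpha) T.1) :
    ∃ S, covC2 a b .alpha S T := by
  rcases exists_pos_of_tabSum_pos h with ⟨j₀, hj₀⟩ | ⟨i₀, hi₀⟩
  · by_cases h23 : ∃ j, T.1.1 j = (2, 3)
    · exact exists_covC2_raise_bottom h23 le_rfl (by decide)
    by_cases h1 : ∃ i, T.1.2 i = 1
    · exact exists_covC2_raise_box h1 (by norm_num)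
    simp only [not_exists] at h23 h1
    have h13 : T.1.1 j₀ = (1, 3) := by
      simp only [rhoCol] at hj₀; split_ifs at hj₀ <;> simp_all
    refine exists_covC2_raise_top ⟨j₀, h13⟩ (by norm_num) (fun i => ?_) (fun _ => h23)
    have := T.2.2.1 i
    have := h1 i
    omega
  · have hi : T.1.2 i₀ = 1 ∨ T.1.2 i₀ = 3 := by
      simp only [rhoBox] at hi₀; split_ifs at hi₀ <;> simp_all
    rcases hi with hi | hi <;> exact exists_covC2_raise_box ⟨i₀, hi⟩ (by norm_num)

lemma exists_covC2_alpha_of_delta_pos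
    (h : 0 < tabSum (deltaCol .alpha) (deltaBox .alpha) T.1) : ∃ S, covC2 a b .alpha T S := by
  by_cases h23 : ∃ j, T.1.1 j = (2, 3)
  · exact exists_covC2_lower_top (v := 1) h23 le_rfl (by decide)
  simp only [not_exists] at h23
  by_cases h24 : ∃ j, T.1.1 j = (2, 4)
  · exact exists_covC2_lower_bottom (v := 3) h24 (by norm_num) (fun _ => h23)
  simp only [not_exists] at h24
  rcases exists_pos_of_tabSum_pos h with ⟨j₀, hj₀⟩ | ⟨i₀, hi₀⟩
  · simp only [deltaCol] at hj₀; split_ifs at hj₀ <;> simp_all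
  have hi : T.1.2 i₀ = 2 ∨ T.1.2 i₀ = 4 := by
    simp only [deltaBox] at hi₀; split_ifs at hi₀ <;> simp_all
  rcases hi with hi | hi
  · refine exists_covC2_lower_box (v := 1) ⟨i₀, hi⟩ le_rfl fun j => ?_
    have hmem := mem_c2Columns T.2 j
    have := T.2.2.2.2.2.1 j i₀
    have := h23 j
    have := h24 j
    simp only [c2Columns, List.mem_cons, List.not_mem_nil, or_false] at hmem
    rcases hmem with hc | hc | hc | hc | hc <;> simp_all
  · exact exists_covC2_lower_box (v := 3) ⟨i₀, hi⟩ (by norm_num) fun j => by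
      have := T.2.1 j; omega

lemma exists_covC2_beta_of_rho_pos (h : 0 < tabSum (rhoCol .beta) (rhoBox .beta) T.1) :
    ∃ S, covC2 a b .beta S T := by
  by_cases h2 : ∃ i, T.1.2 i = 2
  · exact exists_covC2_raise_box h2 (by norm_num)
  by_cases h12 : ∃ j, T.1.1 j = (1, 2)
  · exact exists_covC2_raise_bottom h12 (by norm_num) (by decide)
  simp only [not_exists] at h2 h12
  rcases exists_pos_of_tabSum_pos h with ⟨j₀, hj₀⟩ | ⟨i₀, hi₀⟩
  · have h24 : T.1.1 j₀ = (2, 4) := by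
      simp only [rhoCol] at hj₀; split_ifs at hj₀ <;> simp_all
    refine exists_covC2_raise_top ⟨j₀, h24⟩ (by norm_num) (fun i => ?_)
      (fun h => absurd h (by decide))
    have := T.2.2.2.2.2.1 j₀ i
    have := h2 i
    rw [h24] at *
    omega
  · simp only [rhoBox] at hi₀; split_ifs at hi₀ <;> simp_all

lemma exists_covC2_beta_of_delta_pos
    (h : 0 < tabSum (deltaCol .beta) (deltaBox .beta) T.1) : ∃ S, covC2 a b .beta T S := by
  by_cases h34 : ∃ j, T.1.1 j = (3, 4)
  · exact exists_covC2_lower_top (v := 2) h34 (by norm_num) (by decide)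
  by_cases h13 : ∃ j, T.1.1 j = (1, 3)
  · exact exists_covC2_lower_bottom (v := 2) h13 (by norm_num) (fun h => absurd h (by decide))
  simp only [not_exists] at h34 h13
  rcases exists_pos_of_tabSum_pos h with ⟨j₀, hj₀⟩ | ⟨i₀, hi₀⟩
  · simp only [deltaCol] at hj₀; split_ifs at hj₀ <;> simp_all
  have hi : T.1.2 i₀ = 3 := by
    simp only [deltaBox] at hi₀; split_ifs at hi₀ <;> simp_all
  refine exists_covC2_lower_box (v := 2) ⟨i₀, hi⟩ (by norm_num) fun j => ?_
  have hmem := mem_c2Columns T.2 j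
  have := h34 j
  simp only [c2Columns, List.mem_cons, List.not_mem_nil, or_false] at hmem
  rcases hmem with hc | hc | hc | hc | hc <;> simp_all

end Potentials

section Weight

variable {a b : ℕ}

theorem rhoOf_covC2 (γ : TwoColor) (T : {T : TabT a b // T ∈ SC2 a b}) :
    rhoOf (covC2 a b γ) T = tabSum (rhoCol γ) (rhoBox γ) T.1 :=
  rhoOf_eq_of_potential (W := fun T => tabSum (rhoCol γ) (rhoBox γ) T.1)
    (fun _ _ h => by
      simpa using (tabSum_add_of_covC2 (f := rhoCol γ) (g := rhoBox γ) (d₁ := 0) (d₂ := 1)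
        (by cases γ <;> decide) (by cases γ <;> decide) h))
    (fun _ h => by
      cases γ
      exacts [exists_covC2_alpha_of_rho_pos h, exists_covC2_beta_of_rho_pos h]) T

theorem deltaOf_covC2 (γ : TwoColor) (T : {T : TabT a b // T ∈ SC2 a b}) :
    deltaOf (covC2 a b γ) T = tabSum (deltaCol γ) (deltaBox γ) T.1 :=
  deltaOf_eq_of_potential (W := fun T => tabSum (deltaCol γ) (deltaBox γ) T.1)
    (fun _ _ h => by
      simpa using (tabSum_add_of_covC2 (f := deltaCol γ) (g := deltaBox γ) (d₁ := 1) (d₂ := 0)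
        (by cases γ <;> decide) (by cases γ <;> decide) h).symm)
    (fun _ h => by
      cases γ
      exacts [exists_covC2_alpha_of_delta_pos h, exists_covC2_beta_of_delta_pos h]) T

def colWt (c : ℕ × ℕ) : ℤ × ℤ :=
  ((rhoCol .alpha c : ℤ) - deltaCol .alpha c, (rhoCol .beta c : ℤ) - deltaCol .beta c)

def boxWt (k : ℕ) : ℤ × ℤ :=
  ((rhoBox .alpha k : ℤ) - deltaBox .alpha k, (rhoBox .beta k : ℤ) - deltaBox .beta k)

theorem wtOf_covC2 (T : {T : TabT a b // T ∈ SC2 a b}) :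
    wtOf (covC2 a b) T = tabSum colWt boxWt T.1 := by
  simp only [wtOf, rhoOf_covC2, deltaOf_covC2, tabSum, colWt, boxWt, Prod.ext_iff,
    Prod.fst_add, Prod.snd_add, Prod.fst_sum, Prod.snd_sum, Nat.cast_add, Nat.cast_sum,
    Finset.sum_sub_distrib]
  constructor <;> ring

end Weight

/-- For all `a, b ≥ 0`, the edge-colored distributive lattice `L_C2(a,b)` of
`C2`-semistandard tableaux of shape `(a,b)` satisfies the structure condition for
the `C2` Cartan matrix with rows `M_α = (2,−1)`, `M_β = (−2,2)`. -/
theorem C2_lattice_structure_condition (a b : ℕ) :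
    StructureCondition (covC2 a b) MC2 := by
  intro γ S T h
  rw [wtOf_covC2, wtOf_covC2]
  simpa using tabSum_add_of_covC2 (f := colWt) (g := boxWt) (d₁ := 0) (d₂ := MC2 γ)
    (by cases γ <;> decide) (by cases γ <;> decide) h
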